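/- arXiv:2605.21801 — 2 statements merged into one kernel-verified Lean document; each statement's English description precedes it below -/
import Mathlib

section
/- Let π ∈ ℝ^G be a probability vector, let e_1, …, e_G be unit vectors in ℝ^m (the semantic embeddings), and let g_1, …, g_G ∈ ℝ^d (the expected gradient directions). Suppose the semantic-gradient smoothness condition holds: ‖g_i − g_j‖² ≤ L² · (1 − ⟨e_i, e_j⟩) for all i, j, where L ≥ 0. Then the weighted gradient variance is bounded by the scaled Cosine Dispersion: Σ_{i=1}^G π_i ‖g_i − ḡ‖² ≤ (L²/2) · Σ_{i=1}^G Σ_{j=1}^G π_i π_j (1 − ⟨e_i, e_j⟩), where ḡ = Σ_{i=1}^G π_i g_i. -/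
open scoped RealInnerProductSpace

/-- Under the semantic-gradient smoothness condition
`‖g_i − g_j‖² ≤ L² (1 − ⟨e_i, e_j⟩)` for unit semantic embeddings `e_i`, the weighted
gradient variance is bounded by the scaled Cosine Dispersion. -/
theorem gradient_variance_le_cosine_dispersion
    (G m d : ℕ) (π : Fin G → ℝ)
    (e : Fin G → EuclideanSpace ℝ (Fin m)) (g : Fin G → EuclideanSpace ℝ (Fin d))
    (L : ℝ) (hL : 0 ≤ L)
    (hnonneg : ∀ i, 0 ≤ π i) (hsum : ∑ i, π i = 1)
    (hunit : ∀ i, ‖e i‖ = 1)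
    (hsmooth : ∀ i j, ‖g i - g j‖ ^ 2 ≤ L ^ 2 * (1 - ⟪e i, e j⟫)) :
    ∑ i, π i * ‖g i - ∑ k, π k • g k‖ ^ 2 ≤
      (L ^ 2 / 2) * ∑ i, ∑ j, π i * π j * (1 - ⟪e i, e j⟫) := by
  set gbar : EuclideanSpace ℝ (Fin d) := ∑ k, π k • g k with hgb
  have hinner_bar : ∀ i, ⟪g i, gbar⟫ = ∑ j, π j * ⟪g i, g j⟫ := by
    intro i
    rw [hgb, inner_sum]
    exact Finset.sum_congr rfl fun j _ => real_inner_smul_right _ _ _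
  have hbar_norm : ‖gbar‖ ^ 2 = ∑ i, ∑ j, π i * π j * ⟪g i, g j⟫ := by
    rw [← real_inner_self_eq_norm_sq]
    conv_lhs => rw [hgb, sum_inner]
    refine Finset.sum_congr rfl fun i _ => ?_
    rw [real_inner_smul_left, ← hgb, hinner_bar, Finset.mul_sum]
    refine Finset.sum_congr rfl fun j _ => by ring
  have h1 : ∀ i, ‖g i - gbar‖ ^ 2 = ‖g i‖ ^ 2 - 2 * ⟪g i, gbar⟫ + ‖gbar‖ ^ 2 := by
    intro i; rw [@norm_sub_sq_real]
  have h2 : ∀ i j, ‖g i - g j‖ ^ 2 = ‖g i‖ ^ 2 - 2 * ⟪g i, g j⟫ + ‖g j‖ ^ 2 := by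
    intro i j; rw [@norm_sub_sq_real]
  have hsib : ∑ i, π i * ⟪g i, gbar⟫ = ‖gbar‖ ^ 2 := by
    rw [hbar_norm]
    refine Finset.sum_congr rfl fun i _ => ?_
    rw [hinner_bar, Finset.mul_sum]
    refine Finset.sum_congr rfl fun j _ => by ring
  have lhs_eq : ∑ i, π i * ‖g i - gbar‖ ^ 2 = ∑ i, π i * ‖g i‖ ^ 2 - ‖gbar‖ ^ 2 := by
    calc ∑ i, π i * ‖g i - gbar‖ ^ 2
        = ∑ i, (π i * ‖g i‖ ^ 2 - 2 * (π i * ⟪g i, gbar⟫) + π i * ‖gbar‖ ^ 2) := by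
          refine Finset.sum_congr rfl fun i _ => ?_
          rw [h1 i]; ring
      _ = ∑ i, π i * ‖g i‖ ^ 2 - 2 * ∑ i, π i * ⟪g i, gbar⟫ + (∑ i, π i) * ‖gbar‖ ^ 2 := by
          rw [Finset.sum_add_distrib, Finset.sum_sub_distrib, ← Finset.mul_sum,
            ← Finset.sum_mul]
      _ = ∑ i, π i * ‖g i‖ ^ 2 - ‖gbar‖ ^ 2 := by rw [hsib, hsum]; ring
  have hA : ∑ i, ∑ j, π i * π j * ‖g i‖ ^ 2 = ∑ i, π i * ‖g i‖ ^ 2 := by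
    refine Finset.sum_congr rfl fun i _ => ?_
    calc ∑ j, π i * π j * ‖g i‖ ^ 2 = π i * ‖g i‖ ^ 2 * ∑ j, π j := by
          rw [Finset.mul_sum]
          refine Finset.sum_congr rfl fun j _ => by ring
      _ = π i * ‖g i‖ ^ 2 := by rw [hsum, mul_one]
  have hB : ∑ i, ∑ j, π i * π j * ‖g j‖ ^ 2 = ∑ j, π j * ‖g j‖ ^ 2 := by
    rw [Finset.sum_comm]
    refine Finset.sum_congr rfl fun j _ => ?_
    calc ∑ i, π i * π j * ‖g j‖ ^ 2 = π j * ‖g j‖ ^ 2 * ∑ i, π i := by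
          rw [Finset.mul_sum]
          refine Finset.sum_congr rfl fun i _ => by ring
      _ = π j * ‖g j‖ ^ 2 := by rw [hsum, mul_one]
  have rhs_eq : ∑ i, ∑ j, π i * π j * ‖g i - g j‖ ^ 2
      = 2 * (∑ i, π i * ‖g i‖ ^ 2 - ‖gbar‖ ^ 2) := by
    calc ∑ i, ∑ j, π i * π j * ‖g i - g j‖ ^ 2
        = ∑ i, ∑ j, (π i * π j * ‖g i‖ ^ 2 - 2 * (π i * π j * ⟪g i, g j⟫)
            + π i * π j * ‖g j‖ ^ 2) := by
          refine Finset.sum_congr rfl fun i _ => Finset.sum_congr rfl fun j _ => ?_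
          rw [h2 i j]; ring
      _ = (∑ i, ∑ j, π i * π j * ‖g i‖ ^ 2)
            - 2 * (∑ i, ∑ j, π i * π j * ⟪g i, g j⟫)
            + ∑ i, ∑ j, π i * π j * ‖g j‖ ^ 2 := by
          simp [Finset.sum_add_distrib, Finset.sum_sub_distrib, Finset.mul_sum]
      _ = 2 * (∑ i, π i * ‖g i‖ ^ 2 - ‖gbar‖ ^ 2) := by
          rw [hA, hB, ← hbar_norm]; ring
  have key : ∑ i, π i * ‖g i - gbar‖ ^ 2
      = (1 / 2) * ∑ i, ∑ j, π i * π j * ‖g i - g j‖ ^ 2 := by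
    rw [lhs_eq, rhs_eq]; ring
  rw [key]
  have hST : ∑ i, ∑ j, π i * π j * ‖g i - g j‖ ^ 2
      ≤ ∑ i, ∑ j, L ^ 2 * (π i * π j * (1 - ⟪e i, e j⟫)) := by
    refine Finset.sum_le_sum fun i _ => Finset.sum_le_sum fun j _ => ?_
    have hp : 0 ≤ π i * π j := mul_nonneg (hnonneg i) (hnonneg j)
    calc π i * π j * ‖g i - g j‖ ^ 2
        ≤ π i * π j * (L ^ 2 * (1 - ⟪e i, e j⟫)) :=
          mul_le_mul_of_nonneg_left (hsmooth i j) hp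
      _ = L ^ 2 * (π i * π j * (1 - ⟪e i, e j⟫)) := by ring
  have : ∑ i, ∑ j, L ^ 2 * (π i * π j * (1 - ⟪e i, e j⟫))
      = L ^ 2 * ∑ i, ∑ j, π i * π j * (1 - ⟪e i, e j⟫) := by
    simp [Finset.mul_sum]
  rw [this] at hST
  linarith
end

section
/- Fix an integer G ≥ 1 and reals a ≤ b. Over all tuples (r_1, …, r_G) with r_i ∈ [a, b] for every i, the maximum value of the raw reward dispersion Σ_{i=1}^G |r_i − r̄|, where r̄ = (1/G) Σ_{j=1}^G r_j, equals (2/G) · ⌊G/2⌋ · ⌈G/2⌉ · (b − a); moreover this maximum is attained. -/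
/-!
Deviations from the mean sum to zero, so the dispersion is twice the total positive deviation `T`.
If `p` entries lie above the mean `c` and the other `q` do not, then `T ≤ p (b - c)` and
`T ≤ q (c - a)`, whence `(p + q) T ≤ p q (b - a) ≤ ⌊G/2⌋ ⌈G/2⌉ (b - a)`. Equality holds when
`⌊G/2⌋` entries equal `b` and the others equal `a`.
-/

open Finset

theorem Nat.mul_le_div_two_mul_succ_div_two {p q n : ℕ} (h : p + q = n) :
    p * q ≤ n / 2 * ((n + 1) / 2) := by
  set k := n / 2
  set m := (n + 1) / 2
  have hgap : 0 ≤ ((p : ℤ) - k) * (p - m) := by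
    rcases le_or_gt p k with hp | hp
    · exact mul_nonneg_of_nonpos_of_nonpos (by omega) (by omega)
    · exact mul_nonneg (by omega) (by omega)
  -- `k m - p q = (p - k) (p - m)`, and no integer lies strictly between `k` and `m`
  have hq : (q : ℤ) = k + m - p := by omega
  zify
  rw [hq]
  linear_combination hgap

section PosPart

variable {ι α : Type*} [AddCommGroup α] [Lattice α] [AddLeftMono α] {s : Finset ι} {x : ι → α}

theorem Finset.sum_negPart_eq_sum_posPart (h : ∑ i ∈ s, x i = 0) :
    ∑ i ∈ s, (x i)⁻ = ∑ i ∈ s, (x i)⁺ := by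
  rw [eq_comm, ← sub_eq_zero, ← sum_sub_distrib]
  simpa only [posPart_sub_negPart] using h

theorem Finset.sum_abs_eq_two_nsmul_sum_posPart (h : ∑ i ∈ s, x i = 0) :
    ∑ i ∈ s, |x i| = 2 • ∑ i ∈ s, (x i)⁺ := by
  rw [two_nsmul]
  nth_rw 2 [← sum_negPart_eq_sum_posPart h]
  simp only [← sum_add_distrib, posPart_add_negPart]

end PosPart

section Dispersion

variable {ι K : Type*} [Field K] [LinearOrder K] [IsStrictOrderedRing K]

/-- The paper's `RD_raw`. -/
def rawDispersion (s : Finset ι) (r : ι → K) : K :=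
  ∑ i ∈ s, |r i - (∑ j ∈ s, r j) / #s|

theorem Finset.sum_sub_sum_div_card (s : Finset ι) (r : ι → K) :
    ∑ i ∈ s, (r i - (∑ j ∈ s, r j) / #s) = 0 := by
  rcases s.eq_empty_or_nonempty with rfl | hs
  · simp
  rw [sum_sub_distrib, sum_const, nsmul_eq_mul, mul_div_cancel₀ _ (by positivity), sub_self]

theorem card_mul_sum_posPart_sub_le {s : Finset ι} {r : ι → K} {a b c : K}
    (hr : ∀ i ∈ s, r i ∈ Set.Icc a b) (hc : ∑ i ∈ s, (r i - c) = 0) :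
    #s * ∑ i ∈ s, (r i - c)⁺ ≤ #{i ∈ s | c < r i} * #{i ∈ s | ¬c < r i} * (b - a) := by
  have h_above : ∑ i ∈ s, (r i - c)⁺ ≤ #{i ∈ s | c < r i} * (b - c) := by
    have h_zero : ∑ i ∈ s with ¬c < r i, (r i - c)⁺ = 0 :=
      sum_eq_zero fun i hi ↦ posPart_eq_zero.2 (by grind)
    rw [← sum_filter_add_sum_filter_not s (c < r ·), h_zero, add_zero, ← nsmul_eq_mul]
    exact sum_le_card_nsmul _ _ _ fun i hi ↦ by grind [posPart_eq_self]
  have h_below : ∑ i ∈ s, (r i - c)⁺ ≤ #{i ∈ s | ¬c < r i} * (c - a) := by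
    have h_zero : ∑ i ∈ s with c < r i, (r i - c)⁻ = 0 :=
      sum_eq_zero fun i hi ↦ negPart_eq_zero.2 (by grind)
    rw [← sum_negPart_eq_sum_posPart hc, ← sum_filter_add_sum_filter_not s (c < r ·), h_zero,
      zero_add, ← nsmul_eq_mul]
    exact sum_le_card_nsmul _ _ _ fun i hi ↦ by grind [negPart_eq_neg]
  have hcard : (#s : K) = #{i ∈ s | c < r i} + #{i ∈ s | ¬c < r i} := by
    exact_mod_cast (card_filter_add_card_filter_not _).symm
  rw [hcard]
  linear_combination (#{i ∈ s | ¬c < r i} : K) * h_above + (#{i ∈ s | c < r i} : K) * h_below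

theorem card_mul_sum_abs_sub_le {s : Finset ι} {r : ι → K} {a b c : K}
    (hr : ∀ i ∈ s, r i ∈ Set.Icc a b) (hc : ∑ i ∈ s, (r i - c) = 0) :
    #s * ∑ i ∈ s, |r i - c| ≤ 2 * (#s / 2 : ℕ) * ((#s + 1) / 2 : ℕ) * (b - a) := by
  rcases s.eq_empty_or_nonempty with rfl | ⟨i₀, hi₀⟩
  · simp
  have hab : 0 ≤ b - a := sub_nonneg.2 ((hr i₀ hi₀).1.trans (hr i₀ hi₀).2)
  have hcount : (#{i ∈ s | c < r i} * #{i ∈ s | ¬c < r i} : K) ≤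
      (#s / 2 : ℕ) * ((#s + 1) / 2 : ℕ) := by
    exact_mod_cast Nat.mul_le_div_two_mul_succ_div_two (card_filter_add_card_filter_not _)
  calc #s * ∑ i ∈ s, |r i - c| = 2 * (#s * ∑ i ∈ s, (r i - c)⁺) := by
        rw [sum_abs_eq_two_nsmul_sum_posPart hc, nsmul_eq_mul, Nat.cast_ofNat, mul_left_comm]
    _ ≤ 2 * (#{i ∈ s | c < r i} * #{i ∈ s | ¬c < r i} * (b - a)) := by
        gcongr 2 * ?_
        exact card_mul_sum_posPart_sub_le hr hc
    _ ≤ 2 * ((#s / 2 : ℕ) * ((#s + 1) / 2 : ℕ) * (b - a)) := by gcongr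
    _ = 2 * (#s / 2 : ℕ) * ((#s + 1) / 2 : ℕ) * (b - a) := by ring

theorem rawDispersion_le {s : Finset ι} {r : ι → K} {a b : K} (hr : ∀ i ∈ s, r i ∈ Set.Icc a b) :
    rawDispersion s r ≤ 2 / #s * (#s / 2 : ℕ) * ((#s + 1) / 2 : ℕ) * (b - a) := by
  rcases s.eq_empty_or_nonempty with rfl | hs
  · simp [rawDispersion]
  rw [rawDispersion, mul_assoc, mul_assoc, div_mul_eq_mul_div, le_div_iff₀ (by positivity),
    mul_comm, ← mul_assoc, ← mul_assoc]
  exact card_mul_sum_abs_sub_le hr (sum_sub_sum_div_card s r)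

theorem rawDispersion_ite_mem [DecidableEq ι] {s t : Finset ι} (hts : t ⊆ s) (a b : K) :
    rawDispersion s (fun i ↦ if i ∈ t then b else a) = 2 / #s * #t * #(s \ t) * |b - a| := by
  rcases s.eq_empty_or_nonempty with rfl | hs
  · simp [rawDispersion, subset_empty.1 hts]
  have hsum (f : K → K) : ∑ i ∈ s, f (if i ∈ t then b else a) = #(s \ t) * f a + #t * f b := by
    have h_out : ∀ i ∈ s \ t, f (if i ∈ t then b else a) = f a := fun i hi ↦ by
      rw [if_neg (mem_sdiff.1 hi).2]
    have h_in : ∀ i ∈ t, f (if i ∈ t then b else a) = f b := fun i hi ↦ by rw [if_pos hi]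
    rw [← sum_sdiff hts, sum_congr rfl h_out, sum_congr rfl h_in, sum_const, sum_const,
      nsmul_eq_mul, nsmul_eq_mul]
  have hcard : (#s : K) = #(s \ t) + #t := by
    exact_mod_cast (card_sdiff_add_card_eq_card hts).symm
  have hs' : (#s : K) ≠ 0 := by positivity
  have ha : a - (#(s \ t) * a + #t * b) / #s = #t * (a - b) / #s := by
    field_simp
    linear_combination a * hcard
  have hb : b - (#(s \ t) * a + #t * b) / #s = #(s \ t) * (b - a) / #s := by
    field_simp
    linear_combination b * hcard
  have h_mean := hsum id
  have h_disp := hsum (|· - (#(s \ t) * a + #t * b) / #s|)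
  simp only [id] at h_mean h_disp
  rw [rawDispersion, h_mean, h_disp, ha, hb, abs_div, abs_div, abs_mul, abs_mul, abs_sub_comm a b]
  simp only [Nat.abs_cast]
  field_simp
  ring

end Dispersion

theorem reward_dispersion_max_general
    (G : ℕ) (a b : ℝ) (hab : a ≤ b) :
    IsGreatest
      {s : ℝ | ∃ r : Fin G → ℝ, (∀ i, r i ∈ Set.Icc a b) ∧
        s = ∑ i, |r i - (∑ j, r j) / G|}
      ((2 / (G : ℝ)) * (G / 2 : ℕ) * ((G + 1) / 2 : ℕ) * (b - a)) := by
  have h_disp (r : Fin G → ℝ) : ∑ i, |r i - (∑ j, r j) / G| = rawDispersion univ r := by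
    rw [rawDispersion, card_univ, Fintype.card_fin]
  simp only [h_disp]
  constructor
  · obtain ⟨t, -, ht⟩ := exists_subset_card_eq (s := (univ : Finset (Fin G))) (n := G / 2)
      (by simp only [card_univ, Fintype.card_fin]; omega)
    refine ⟨fun i ↦ if i ∈ t then b else a,
      fun i ↦ by by_cases hi : i ∈ t <;> simp [hi, hab], ?_⟩
    have h_compl : #(univ \ t) = (G + 1) / 2 := by
      rw [card_univ_sdiff, Fintype.card_fin, ht]; omega
    rw [rawDispersion_ite_mem (subset_univ t), card_univ, Fintype.card_fin, ht, h_compl,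
      abs_of_nonneg (sub_nonneg.2 hab)]
  · rintro _ ⟨r, hr, rfl⟩
    simpa only [card_univ, Fintype.card_fin] using rawDispersion_le (s := univ) fun i _ ↦ hr i

/-- For `G ≥ 1` and `a ≤ b`, over all tuples `(r_1, …, r_G)` with `r_i ∈ [a, b]`, the
maximum value of the raw reward dispersion `∑_i |r_i − r̄|` (where `r̄` is the mean)
equals `(2/G) ⌊G/2⌋ ⌈G/2⌉ (b − a)`, and this maximum is attained. -/
theorem reward_dispersion_max
    (G : ℕ) (hG : 1 ≤ G) (a b : ℝ) (hab : a ≤ b) :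
    IsGreatest
      {s : ℝ | ∃ r : Fin G → ℝ, (∀ i, r i ∈ Set.Icc a b) ∧
        s = ∑ i, |r i - (∑ j, r j) / G|}
      ((2 / (G : ℝ)) * (G / 2 : ℕ) * ((G + 1) / 2 : ℕ) * (b - a)) :=
  reward_dispersion_max_general G a b hab
end
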